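/- arXiv:math/0603252 — 5 statements merged into one kernel-verified Lean document; each statement's English description precedes it below -/
import Mathlib

section
/- For every sequence U₁, U₂, … of open sets in π₁^top(HE,p) each containing the class [P] of the constant loop, there exists for each n an integer m_n > 1 such that the loop f_n = (α₁ * α_{m_n} * α₁⁻¹ * α_{m_n}⁻¹)^n lies in Π⁻¹(U_n), where α_i denotes a loop traversing the i-th circle X_i once. -/
open unitInterval Filter Topology

noncomputable section

/-- The `n`-th circle of the Hawaiian earring: radius `1/n`, centre `(1/n, 0)`.
(For `n = 0` this degenerates to the single point `(0,0)` since `1/0 = 0` in Lean.) -/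
def circ (n : ℕ) : Set (ℝ × ℝ) :=
  {x | (x.1 - 1 / n) ^ 2 + x.2 ^ 2 = (1 / n) ^ 2}

/-- The Hawaiian earring as a subset of the plane. -/
def HEset : Set (ℝ × ℝ) := ⋃ n : ℕ, circ n

/-- The Hawaiian earring as a topological (metric) space. -/
abbrev HE : Type := ↥HEset

lemma origin_mem_circ (n : ℕ) : ((0, 0) : ℝ × ℝ) ∈ circ n := by
  simp [circ]

/-- The basepoint `p = (0,0)` of the Hawaiian earring. -/
def hep : HE := ⟨(0, 0), Set.mem_iUnion.2 ⟨1, origin_mem_circ 1⟩⟩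

/-- The point `q = (2,0)` on the largest circle `X₁`, distinct from `p`. -/
def qpt : HE := ⟨(2, 0), Set.mem_iUnion.2 ⟨1, by norm_num [circ]⟩⟩

/-- The standard parametrisation of the `i`-th circle, starting and ending at the origin. -/
def alphaFun (i : ℕ) (t : ℝ) : ℝ × ℝ :=
  ((1 / i) * (1 - Real.cos (2 * Real.pi * t)), (1 / i) * Real.sin (2 * Real.pi * t))

lemma alphaFun_mem (i : ℕ) (t : ℝ) : alphaFun i t ∈ HEset := by
  refine Set.mem_iUnion.2 ⟨i, ?_⟩
  have h := Real.sin_sq_add_cos_sq (2 * Real.pi * t)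
  simp only [circ, alphaFun, Set.mem_setOf_eq]
  nlinarith [h]

/-- The loop `αᵢ` traversing the `i`-th circle of the Hawaiian earring once. -/
def alpha (i : ℕ) : Path hep hep where
  toFun t := ⟨alphaFun i t, alphaFun_mem i t⟩
  continuous_toFun := by
    refine Continuous.subtype_mk ?_ _
    unfold alphaFun
    fun_prop
  source' := by
    ext : 1
    simp [alphaFun, hep]
  target' := by
    ext : 1
    simp [alphaFun, hep, Real.cos_two_pi, Real.sin_two_pi]

/-- `n`-fold concatenation of a loop with itself. -/
def loopPow {X : Type*} [TopologicalSpace X] {p : X} (γ : Path p p) : ℕ → Path p p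
  | 0 => Path.refl p
  | n + 1 => (loopPow γ n).trans γ

/-- The commutator-power loops `fₙ = (α₁ * α_m * α₁⁻¹ * α_m⁻¹)ⁿ`. -/
def fLoop (m n : ℕ) : Path hep hep :=
  loopPow ((((alpha 1).trans (alpha m)).trans (alpha 1).symm).trans (alpha m).symm) n

/-- `oscGE q g M` : there are `t₀ < t₁ < ⋯ < t_M` in `[0,1]` with `g(t_{2i}) = p`
and `g(t_{2i+1}) = q`. -/
def oscGE (q : HE) (g : I → HE) (M : ℕ) : Prop :=
  ∃ t : Fin (M + 1) → I, StrictMono t ∧ ∀ i : Fin (M + 1),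
    ((i : ℕ) % 2 = 0 → g (t i) = hep) ∧ ((i : ℕ) % 2 = 1 → g (t i) = q)

/-- The oscillation number of a based loop, an element of `ℕ ∪ {∞}`. -/
def osc (q : HE) (g : I → HE) : ℕ∞ :=
  ⨆ (M : ℕ) (_ : oscGE q g M), (M : ℕ∞)

/-- The topological fundamental group: path components of the based loop space
(with the uniform-convergence = compact-open topology), with the quotient topology. -/
def Pi1Top (X : Type*) [TopologicalSpace X] (p : X) : Type _ :=
  Quotient (pathSetoid (Path p p))

instance (X : Type*) [TopologicalSpace X] (p : X) : TopologicalSpace (Pi1Top X p) :=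
  instTopologicalSpaceQuotient

/-- The canonical surjection `Π : C_p(X) → π₁^top(X,p)`. -/
def Pr {X : Type*} [TopologicalSpace X] {p : X} (γ : Path p p) : Pi1Top X p :=
  Quotient.mk _ γ

/-! As `m → ∞` the loops `fLoop m n` converge uniformly to `fLoop 0 n`, since the `m`-th circle
has diameter `2/m` and `alpha 0` is the constant loop. The limit is the `n`-th power of a
commutator with a trivial loop, hence null-homotopic, so it lies in `Π⁻¹(Uₙ)`. This set is
open because `Π` is continuous, and therefore contains `fLoop m n` for all large `m`. -/

theorem Path.Homotopic.joined {X : Type*} [TopologicalSpace X] {x y : X} {γ γ' : Path x y}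
    (h : γ.Homotopic γ') : Joined γ γ' := by
  obtain ⟨H⟩ := h
  exact ⟨⟨⟨H.eval, Path.continuous_uncurry_iff.1 H.continuous⟩,
    H.eval_zero, H.eval_one⟩⟩

theorem continuous_Pr {X : Type*} [TopologicalSpace X] {p : X} :
    Continuous (Pr : Path p p → Pi1Top X p) :=
  continuous_quotient_mk'

theorem Pr_eq_of_homotopic {X : Type*} [TopologicalSpace X] {p : X} {γ γ' : Path p p}
    (h : γ.Homotopic γ') : Pr γ = Pr γ' :=
  Quotient.sound h.joined

theorem loopPow_homotopic_refl {X : Type*} [TopologicalSpace X] {p : X} {γ : Path p p}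
    (h : γ.Homotopic (Path.refl p)) (n : ℕ) : (loopPow γ n).Homotopic (Path.refl p) := by
  induction n with
  | zero => exact Path.Homotopic.refl _
  | succ n ih => exact (ih.hcomp h).trans ⟨Path.Homotopy.transRefl _⟩

theorem commutator_refl_homotopic_refl {X : Type*} [TopologicalSpace X] {p : X}
    (γ : Path p p) :
    (((γ.trans (Path.refl p)).trans γ.symm).trans (Path.refl p).symm).Homotopic
      (Path.refl p) := by
  have hγ : ((γ.trans (Path.refl p)).trans γ.symm).Homotopic (Path.refl p) :=
    (Path.Homotopic.hcomp ⟨Path.Homotopy.transRefl γ⟩ (Path.Homotopic.refl _)).trans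
      ⟨(Path.Homotopy.reflTransSymm γ).symm⟩
  exact (hγ.hcomp (Path.Homotopic.refl _)).trans ⟨(Path.Homotopy.reflTransSymm _).symm⟩

section UniformDistance

variable {X : Type*} [PseudoMetricSpace X] {ε : ℝ}

theorem Path.dist_trans_apply_le {a b c : X} {γ γ' : Path a b} {δ δ' : Path b c}
    (hγ : ∀ s, dist (γ s) (γ' s) ≤ ε) (hδ : ∀ s, dist (δ s) (δ' s) ≤ ε) (t : I) :
    dist (γ.trans δ t) (γ'.trans δ' t) ≤ ε := by
  rw [Path.trans_apply, Path.trans_apply]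
  split_ifs
  exacts [hγ _, hδ _]

theorem Path.dist_symm_apply_le {a b : X} {γ γ' : Path a b}
    (hγ : ∀ s, dist (γ s) (γ' s) ≤ ε) (t : I) : dist (γ.symm t) (γ'.symm t) ≤ ε :=
  hγ _

theorem dist_loopPow_apply_le {p : X} {γ γ' : Path p p} (hε : 0 ≤ ε)
    (hγ : ∀ s, dist (γ s) (γ' s) ≤ ε) (n : ℕ) (t : I) :
    dist (loopPow γ n t) (loopPow γ' n t) ≤ ε := by
  induction n generalizing t with
  | zero => simpa [loopPow] using hε
  | succ n ih => exact Path.dist_trans_apply_le ih hγ t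

end UniformDistance

theorem alpha_zero : alpha 0 = Path.refl hep := by
  ext t : 2
  apply Subtype.ext
  change alphaFun 0 t = (0, 0)
  simp [alphaFun]

theorem dist_alpha_apply_le (m : ℕ) (t : I) : dist (alpha m t) hep ≤ 2 / m := by
  set θ := 2 * Real.pi * (t : ℝ)
  have hm : (0 : ℝ) ≤ 1 / m := by positivity
  have hcos : |1 - Real.cos θ| ≤ 2 :=
    abs_le.2 ⟨by linarith [Real.cos_le_one θ], by linarith [Real.neg_one_le_cos θ]⟩
  have hsin : |Real.sin θ| ≤ 2 := (Real.abs_sin_le_one θ).trans one_le_two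
  change dist (alphaFun m t) (0, 0) ≤ _
  rw [Prod.dist_eq, Real.dist_eq, Real.dist_eq, alphaFun, sub_zero, sub_zero, abs_mul, abs_mul,
    abs_of_nonneg hm, show 2 / (m : ℝ) = 1 / m * 2 by ring]
  exact max_le (mul_le_mul_of_nonneg_left hcos hm) (mul_le_mul_of_nonneg_left hsin hm)

theorem dist_fLoop_apply_le (m n : ℕ) (t : I) : dist (fLoop m n t) (fLoop 0 n t) ≤ 2 / m := by
  have hα₁ (s : I) : dist (alpha 1 s) (alpha 1 s) ≤ 2 / m := by rw [dist_self]; positivity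
  have hαₘ (s : I) : dist (alpha m s) (alpha 0 s) ≤ 2 / m := by
    simpa [alpha_zero] using dist_alpha_apply_le m s
  exact dist_loopPow_apply_le (by positivity)
    (Path.dist_trans_apply_le (Path.dist_trans_apply_le (Path.dist_trans_apply_le hα₁ hαₘ)
      (Path.dist_symm_apply_le hα₁)) (Path.dist_symm_apply_le hαₘ)) n t

theorem tendsto_fLoop_atTop (n : ℕ) :
    Tendsto (fun m => fLoop m n) atTop (𝓝 (fLoop 0 n)) := by
  have hcoe : Topology.IsInducing ((↑) : Path hep hep → C(I, HE)) := ⟨rfl⟩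
  rw [hcoe.tendsto_nhds_iff, tendsto_iff_dist_tendsto_zero]
  refine squeeze_zero (fun _ => dist_nonneg)
    (fun m => (ContinuousMap.dist_le (by positivity)).2 (dist_fLoop_apply_le m n)) ?_
  exact tendsto_const_div_atTop_nhds_zero_nat 2

theorem fLoop_zero_homotopic_refl (n : ℕ) : (fLoop 0 n).Homotopic (Path.refl hep) :=
  loopPow_homotopic_refl (by rw [alpha_zero]; exact commutator_refl_homotopic_refl _) n

theorem stmt2 (U : ℕ → Set (Pi1Top HE hep))
    (hU : ∀ n, IsOpen (U n) ∧ Pr (Path.refl hep) ∈ U n) :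
    ∀ n : ℕ, ∃ m : ℕ, 1 < m ∧ fLoop m n ∈ Pr ⁻¹' (U n) := by
  intro n
  have hopen : IsOpen (Pr ⁻¹' U n) := (hU n).1.preimage continuous_Pr
  have hmem : fLoop 0 n ∈ Pr ⁻¹' U n := by
    rw [Set.mem_preimage, Pr_eq_of_homotopic (fLoop_zero_homotopic_refl n)]
    exact (hU n).2
  exact ((eventually_gt_atTop 1).and ((tendsto_fLoop_atTop n).eventually
    (hopen.mem_nhds hmem))).exists

end
end

section
/- The retraction r_n : HE → X_n (identity on X_n, collapsing all other circles to p) is continuous, and for any based loop f whose image lies in X_n, any loop g path-homotopic to f in HE has r_n ∘ g path-homotopic to f in X_n. -/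
open unitInterval Filter Topology

noncomputable section

open Classical

/-- The basepoint `(0,0)` as a point of the `n`-th circle. -/
def pcirc (n : ℕ) : ↥(circ n) := ⟨(0, 0), origin_mem_circ n⟩

/-- The retraction of the Hawaiian earring onto its `n`-th circle, viewed as a
self-map of `HE`: the identity on `Xₙ`, collapsing every other circle to `p`. -/
def rfun (n : ℕ) (x : HE) : HE :=
  if h : (x : ℝ × ℝ) ∈ circ n then ⟨(x : ℝ × ℝ), Set.mem_iUnion.2 ⟨n, h⟩⟩ else hep

/-- The retraction of the Hawaiian earring onto its `n`-th circle. -/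
def rXfun (n : ℕ) (x : HE) : ↥(circ n) :=
  if h : (x : ℝ × ℝ) ∈ circ n then ⟨(x : ℝ × ℝ), h⟩ else pcirc n

-- AUX START
lemma mem_circ_iff' (k : ℕ) (x : ℝ × ℝ) :
    x ∈ circ k ↔ x.1 ^ 2 + x.2 ^ 2 = 2 * (1 / k) * x.1 := by
  simp only [circ, Set.mem_setOf_eq]
  constructor <;> intro h <;> nlinarith

lemma sum_sq_eq_zero {x : ℝ × ℝ} (hx : x ∈ HEset) (h : x.1 = 0) :
    x.1 ^ 2 + x.2 ^ 2 = 0 := by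
  obtain ⟨k, hk⟩ := Set.mem_iUnion.1 hx
  rw [mem_circ_iff'] at hk
  rw [hk, h]; ring

lemma sum_sq_pos {x : ℝ × ℝ} (hx : x ∈ HEset) (h : x ≠ 0) :
    0 < x.1 ^ 2 + x.2 ^ 2 := by
  rcases lt_or_eq_of_le (by positivity : (0:ℝ) ≤ x.1 ^ 2 + x.2 ^ 2) with hp | hp
  · exact hp
  · exfalso
    apply h
    have h1 : x.1 ^ 2 = 0 := by nlinarith [sq_nonneg x.1, sq_nonneg x.2]
    have h2 : x.2 ^ 2 = 0 := by nlinarith [sq_nonneg x.1, sq_nonneg x.2]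
    have := pow_eq_zero_iff (n := 2) (by norm_num) |>.1 h1
    have := pow_eq_zero_iff (n := 2) (by norm_num) |>.1 h2
    exact Prod.ext (by assumption) (by assumption)

/-- The "which circle" function. -/
def gfun (x : ℝ × ℝ) : ℝ := 2 * x.1 / (x.1 ^ 2 + x.2 ^ 2)

lemma gfun_nat {x : ℝ × ℝ} (hx : x ∈ HEset) (h : x ≠ 0) : ∃ m : ℕ, gfun x = m := by
  obtain ⟨k, hk⟩ := Set.mem_iUnion.1 hx
  rw [mem_circ_iff'] at hk
  have hpos := sum_sq_pos hx h
  have hk0 : k ≠ 0 := by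
    rintro rfl
    simp only [Nat.cast_zero, div_zero, mul_zero, zero_mul] at hk
    rw [hk] at hpos; exact lt_irrefl _ hpos
  refine ⟨k, ?_⟩
  have hkR : (k : ℝ) ≠ 0 := Nat.cast_ne_zero.2 hk0
  have hx1 : x.1 ≠ 0 := fun h1 => by
    rw [sum_sq_eq_zero hx h1] at hpos; exact lt_irrefl _ hpos
  rw [gfun, hk]
  field_simp

lemma cond_iff (n : ℕ) {x : ℝ × ℝ} (hx : x ∈ HEset) :
    (n : ℝ) * (x.1 ^ 2 + x.2 ^ 2) = 2 * x.1 ↔ x ∈ circ n := by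
  rcases Nat.eq_zero_or_pos n with rfl | hn
  · simp only [Nat.cast_zero, zero_mul, mem_circ_iff']
    constructor
    · intro h
      have h1 : x.1 = 0 := by linarith
      rw [sum_sq_eq_zero hx h1]
      simp
    · intro h
      have h2 : x.1 ^ 2 + x.2 ^ 2 = 0 := by
        rw [h]; simp
      have h1 : x.1 ^ 2 = 0 := by nlinarith [sq_nonneg x.1, sq_nonneg x.2]
      have := pow_eq_zero_iff (n := 2) (by norm_num) |>.1 h1
      rw [this]; ring
  · have hnR : (n : ℝ) ≠ 0 := Nat.cast_ne_zero.2 hn.ne'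
    rw [mem_circ_iff']
    constructor
    · intro h
      field_simp
      nlinarith
    · intro h
      field_simp at h
      nlinarith

/-- Underlying plane map of the retraction. -/
def Ffun (n : ℕ) (x : ℝ × ℝ) : ℝ × ℝ :=
  if (n : ℝ) * (x.1 ^ 2 + x.2 ^ 2) = 2 * x.1 then x else 0

lemma Ffun_mem (n : ℕ) (x : HE) : Ffun n (x : ℝ × ℝ) ∈ circ n := by
  unfold Ffun
  split_ifs with h
  · exact (cond_iff n x.2).1 h
  · exact origin_mem_circ n

lemma rXfun_eq (n : ℕ) (x : HE) : rXfun n x = ⟨Ffun n (x : ℝ × ℝ), Ffun_mem n x⟩ := by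
  apply Subtype.ext
  show _ = Ffun n (x : ℝ × ℝ)
  unfold rXfun Ffun
  by_cases h : (x : ℝ × ℝ) ∈ circ n
  · rw [dif_pos h, if_pos ((cond_iff n x.2).2 h)]
  · rw [dif_neg h, if_neg (fun c => h ((cond_iff n x.2).1 c))]
    rfl

lemma nat_eq_of_abs_lt {a b : ℕ} (h : |(a : ℝ) - b| < 1) : a = b := by
  have h' : |(a : ℤ) - (b : ℤ)| < 1 := by
    have : ((|(a : ℤ) - (b : ℤ)| : ℤ) : ℝ) = |(a : ℝ) - b| := by push_cast; rfl
    exact_mod_cast this ▸ h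
  rw [abs_lt] at h'
  omega

lemma Ffun_cont (n : ℕ) : Continuous fun x : HE => Ffun n (x : ℝ × ℝ) := by
  rw [continuous_iff_continuousAt]
  intro x
  by_cases hx0 : (x : ℝ × ℝ) = 0
  · -- continuity at the origin by squeezing
    have hF0 : Ffun n (x : ℝ × ℝ) = 0 := by
      unfold Ffun; split_ifs <;> simp [hx0]
    show Filter.Tendsto (fun y : HE => Ffun n (y : ℝ × ℝ)) (nhds x) (nhds (Ffun n (x : ℝ × ℝ)))
    rw [hF0]
    apply squeeze_zero_norm (a := fun y : HE => ‖(y : ℝ × ℝ)‖)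
    · intro y
      unfold Ffun
      split_ifs
      · exact le_refl _
      · simp
    · have h := (continuous_subtype_val.norm).continuousAt (x := x)
      rw [ContinuousAt] at h
      simpa [hx0] using h
  · -- x ≠ 0 : the condition is locally constant
    have hpos := sum_sq_pos x.2 hx0
    obtain ⟨k, hk⟩ := gfun_nat x.2 hx0
    have hgc : ContinuousAt (fun y : HE => gfun (y : ℝ × ℝ)) x := by
      apply ContinuousAt.div
      · fun_prop
      · fun_prop
      · exact ne_of_gt hpos
    have h1 : ∀ᶠ y : HE in nhds x, |gfun (y : ℝ × ℝ) - gfun (x : ℝ × ℝ)| < 1/2 := by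
      have := Metric.tendsto_nhds.mp hgc (1/2) (by norm_num)
      simpa [Real.dist_eq] using this
    have h2 : ∀ᶠ y : HE in nhds x, (y : ℝ × ℝ) ≠ 0 := by
      have : IsOpen {y : HE | (y : ℝ × ℝ) ≠ 0} :=
        isOpen_compl_singleton.preimage continuous_subtype_val
      exact this.mem_nhds hx0
    have key : ∀ᶠ y : HE in nhds x,
        (((n : ℝ) * ((y:ℝ×ℝ).1 ^ 2 + (y:ℝ×ℝ).2 ^ 2) = 2 * (y:ℝ×ℝ).1) ↔
         ((n : ℝ) * ((x:ℝ×ℝ).1 ^ 2 + (x:ℝ×ℝ).2 ^ 2) = 2 * (x:ℝ×ℝ).1)) := by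
      filter_upwards [h1, h2] with y hy1 hy2
      obtain ⟨m, hm⟩ := gfun_nat y.2 hy2
      have hmk : m = k := by
        apply nat_eq_of_abs_lt
        rw [← hm, ← hk]
        linarith [hy1, abs_nonneg (gfun (y:ℝ×ℝ) - gfun (x:ℝ×ℝ))]
      have hposy := sum_sq_pos y.2 hy2
      have ey : ((n : ℝ) * ((y:ℝ×ℝ).1 ^ 2 + (y:ℝ×ℝ).2 ^ 2) = 2 * (y:ℝ×ℝ).1) ↔ (n : ℝ) = m := by
        rw [← hm, gfun, eq_div_iff (ne_of_gt hposy)]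
      have ex : ((n : ℝ) * ((x:ℝ×ℝ).1 ^ 2 + (x:ℝ×ℝ).2 ^ 2) = 2 * (x:ℝ×ℝ).1) ↔ (n : ℝ) = k := by
        rw [← hk, gfun, eq_div_iff (ne_of_gt hpos)]
      rw [ey, ex, hmk]
    by_cases hcx : (n : ℝ) * ((x:ℝ×ℝ).1 ^ 2 + (x:ℝ×ℝ).2 ^ 2) = 2 * (x:ℝ×ℝ).1
    · apply ContinuousAt.congr (continuous_subtype_val.continuousAt)
      filter_upwards [key] with y hy
      unfold Ffun
      rw [if_pos (hy.2 hcx)]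
    · apply ContinuousAt.congr (continuousAt_const (y := (0 : ℝ × ℝ)))
      filter_upwards [key] with y hy
      unfold Ffun
      rw [if_neg (fun h => hcx (hy.1 h))]

lemma rXfun_cont (n : ℕ) : Continuous (rXfun n) := by
  have : rXfun n = fun x => ⟨Ffun n (x : ℝ × ℝ), Ffun_mem n x⟩ := funext (rXfun_eq n)
  rw [this]
  exact (Ffun_cont n).subtype_mk _
-- AUX END

theorem stmt7 (n : ℕ) :
    ∃ hc : Continuous (rXfun n),
      ∀ (f g : Path hep hep) (hf : ∀ t : I, ((f t : HE) : ℝ × ℝ) ∈ circ n),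
        g.Homotopic f →
          ContinuousMap.HomotopicRel
            ⟨fun t : I => rXfun n (g t), hc.comp g.continuous_toFun⟩
            ⟨fun t : I => (⟨((f t : HE) : ℝ × ℝ), hf t⟩ : ↥(circ n)),
              (continuous_subtype_val.comp f.continuous_toFun).subtype_mk hf⟩
            {0, 1} := by
  refine ⟨rXfun_cont n, ?_⟩
  intro f g hf hgf
  obtain ⟨H⟩ := hgf
  have H2 := H.compContinuousMap ⟨rXfun n, rXfun_cont n⟩
  have e1 : (⟨fun t : I => rXfun n (g t), (rXfun_cont n).comp g.continuous_toFun⟩ : C(I, ↥(circ n)))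
      = (⟨rXfun n, rXfun_cont n⟩ : C(HE, ↥(circ n))).comp g.toContinuousMap :=
    ContinuousMap.ext fun t => rfl
  have e2 : (⟨fun t : I => (⟨((f t : HE) : ℝ × ℝ), hf t⟩ : ↥(circ n)),
        (continuous_subtype_val.comp f.continuous_toFun).subtype_mk hf⟩ : C(I, ↥(circ n)))
      = (⟨rXfun n, rXfun_cont n⟩ : C(HE, ↥(circ n))).comp f.toContinuousMap := by
    refine ContinuousMap.ext fun t => ?_
    show (⟨((f t : HE) : ℝ × ℝ), hf t⟩ : ↥(circ n)) = rXfun n (f t)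
    rw [rXfun, dif_pos (hf t)]
  rw [e1, e2]
  exact ⟨H2⟩

end
end

section
/- Suppose F ⊆ C_p(HE) is a union of countably many path components K₁, K₂, … of C_p(HE), each K_n is closed in C_p(HE), and no sequence (g_n) with g_n ∈ K_n for all n has a uniformly convergent subsequence. Then F is closed in C_p(HE), and hence the corresponding set {[f₁], [f₂], …} is closed in π₁^top(HE,p). -/
open unitInterval Filter Topology

noncomputable section

instance Path.firstCountableTopology {X : Type*} [PseudoMetricSpace X] {x y : X} :
    FirstCountableTopology (Path x y) :=
  (Topology.IsInducing.induced ((↑) : Path x y → C(I, X))).firstCountableTopology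

lemma extend_apply_mem {X ι κ : Type*} {K : κ → Set X} {x : κ → X} (hx : ∀ n, x n ∈ K n)
    {φ : ι → κ} (hφ : Function.Injective φ) {g : ι → X} (hg : ∀ k, g k ∈ K (φ k)) (n : κ) :
    Function.extend φ g x n ∈ K n := by
  by_cases hn : ∃ k, φ k = n
  · obtain ⟨k, rfl⟩ := hn
    rw [hφ.extend_apply]
    exact hg k
  · rw [Function.extend_apply' _ _ _ hn]
    exact hx n

/-- For a limit `l` of points `δₖ ∈ K (nₖ)`: either `nₖ < M` infinitely often, and `l` lies in the
closed set `⋃ m < M, K m`, or `nₖ → ∞`, and then a subsequence of `δₖ` is a subsequence of a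
section of `K`, which `h` forbids. -/
theorem isClosed_iUnion_of_forall_not_tendsto_subseq {X : Type*} [TopologicalSpace X]
    [SequentialSpace X] {K : ℕ → Set X} {x : ℕ → X} (hx : ∀ n, x n ∈ K n) (hK : ∀ n, IsClosed (K n))
    (h : ∀ g : ℕ → X, (∀ n, g n ∈ K n) →
      ¬ ∃ (φ : ℕ → ℕ) (l : X), StrictMono φ ∧ Tendsto (g ∘ φ) atTop (𝓝 l)) :
    IsClosed (⋃ n, K n) := by
  refine IsSeqClosed.isClosed fun δ l hδ hl => ?_
  choose n hn using fun k => Set.mem_iUnion.1 (hδ k)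
  by_cases hn_top : Tendsto n atTop atTop
  · obtain ⟨ψ, hψ, hnψ⟩ := strictMono_subseq_of_tendsto_atTop hn_top
    refine absurd ⟨n ∘ ψ, l, hnψ, ?_⟩ (h _ (extend_apply_mem hx hnψ.injective fun k => hn (ψ k)))
    rw [Function.extend_comp hnψ.injective]
    exact hl.comp hψ.tendsto_atTop
  · obtain ⟨M, hM⟩ : ∃ M, ∃ᶠ k in atTop, n k < M := by
      simpa [tendsto_atTop, frequently_atTop] using hn_top
    have hl_mem : l ∈ ⋃ m ∈ Set.Iio M, K m :=
      ((Set.finite_Iio M).isClosed_biUnion fun m _ => hK m).mem_of_frequently_of_tendsto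
        (hM.mono fun k hk => Set.mem_biUnion hk (hn k)) hl
    obtain ⟨m, -, hm⟩ := Set.mem_iUnion₂.1 hl_mem
    exact Set.mem_iUnion.2 ⟨m, hm⟩

theorem isClosed_setOf_exists_eq_Pr_iff {X : Type*} [TopologicalSpace X] {p : X} {ι : Type*}
    (f : ι → Path p p) :
    IsClosed {x : Pi1Top X p | ∃ i, x = Pr (f i)} ↔
      IsClosed (⋃ i, {δ : Path p p | Joined (f i) δ}) := by
  have hPr : IsQuotientMap (Pr : Path p p → Pi1Top X p) := isQuotientMap_quot_mk
  rw [← hPr.isClosed_preimage]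
  congr!
  ext δ
  simp only [Set.mem_preimage, Set.mem_ofPred_eq, Set.mem_iUnion]
  exact exists_congr fun i => Quotient.eq.trans ⟨Joined.symm, Joined.symm⟩

theorem stmt11 (f : ℕ → Path hep hep)
    (hcl : ∀ n, IsClosed {δ : Path hep hep | Joined (f n) δ})
    (hns : ∀ g : ℕ → Path hep hep, (∀ n, Joined (f n) (g n)) →
      ¬ ∃ (φ : ℕ → ℕ) (l : Path hep hep), StrictMono φ ∧ Tendsto (g ∘ φ) atTop (𝓝 l)) :
    IsClosed (⋃ n, {δ : Path hep hep | Joined (f n) δ}) ∧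
      IsClosed {x : Pi1Top HE hep | ∃ n, x = Pr (f n)} := by
  have hU : IsClosed (⋃ n, {δ : Path hep hep | Joined (f n) δ}) :=
    isClosed_iUnion_of_forall_not_tendsto_subseq (fun n => Joined.refl (f n)) hcl hns
  exact ⟨hU, (isClosed_setOf_exists_eq_Pr_iff f).2 hU⟩

end
end

section
/- If A is a retract of a topological space Y via retraction r : Y → A with inclusion i : A → Y, and a ∈ A, then the induced map i_* : π₁^top(A, a) → π₁^top(Y, a) is a topological embedding (continuous, injective, and a homeomorphism onto its image). -/
open unitInterval Filter Topology

noncomputable section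

lemma continuous_pathMap {X Y : Type*} [TopologicalSpace X] [TopologicalSpace Y]
    {x y : X} {f : X → Y} (hf : Continuous f) :
    Continuous fun γ : Path x y => γ.map hf := by
  rw [continuous_induced_rng]
  exact (ContinuousMap.continuous_postcomp ⟨f, hf⟩).comp continuous_induced_dom

/-- The map `i_* : π₁^top(A, a) → π₁^top(Y, a)` induced by the inclusion `A ⊆ Y`. -/
def indMap {Y : Type*} [TopologicalSpace Y] (A : Set Y) (a : A) :
    Pi1Top ↥A a → Pi1Top Y (a : Y) :=
  Quotient.map (fun γ : Path a a => γ.map continuous_subtype_val)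
    (fun γ δ h => by
      obtain ⟨sp⟩ := h
      exact ⟨sp.map (continuous_pathMap continuous_subtype_val)⟩)

namespace Pi1Top

variable {X Y : Type*} [TopologicalSpace X] [TopologicalSpace Y] {x : X} {y : Y}

/-- The cast along `f x = y` lets the target basepoint be given up to propositional
equality, e.g. `r a = a` for a retraction `r`. -/
def mapLoop (f : C(X, Y)) (h : f x = y) (γ : Path x x) : Path y y :=
  (γ.map f.continuous).cast h.symm h.symm

theorem continuous_mapLoop (f : C(X, Y)) (h : f x = y) : Continuous (mapLoop f h) :=
  Path.continuous_uncurry_iff.mp <|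
    show Continuous fun p : Path x x × I => f (p.1 p.2) by fun_prop

def map (f : C(X, Y)) (h : f x = y) : Pi1Top X x → Pi1Top Y y :=
  Quotient.map (mapLoop f h) fun _ _ ⟨p⟩ => ⟨p.map (continuous_mapLoop f h)⟩

theorem continuous_map (f : C(X, Y)) (h : f x = y) : Continuous (map f h) :=
  (continuous_mapLoop f h).quotient_map' _

theorem leftInverse_map {f : C(X, Y)} {g : C(Y, X)} (hf : f x = y) (hg : g y = x)
    (hgf : Function.LeftInverse g f) : Function.LeftInverse (map g hg) (map f hf) := by
  rintro ⟨γ⟩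
  exact congrArg Pr (Path.ext (funext fun t => hgf (γ t)))

theorem isEmbedding_map_of_leftInverse {f : C(X, Y)} {g : C(Y, X)} (hf : f x = y)
    (hg : g y = x) (hgf : Function.LeftInverse g f) : IsEmbedding (map f hf) :=
  (leftInverse_map hf hg hgf).isEmbedding (continuous_map g hg) (continuous_map f hf)

end Pi1Top

theorem indMap_eq_map {Y : Type*} [TopologicalSpace Y] (A : Set Y) (a : A) :
    indMap A a = Pi1Top.map ⟨Subtype.val, continuous_subtype_val⟩ rfl := by
  funext q
  induction q using Quotient.ind
  rfl

theorem stmt16 {Y : Type*} [TopologicalSpace Y] (A : Set Y) (r : Y → A)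
    (hr : Continuous r) (hret : ∀ b : A, r (b : Y) = b) (a : A) :
    IsEmbedding (indMap A a) := by
  rw [indMap_eq_map]
  exact Pi1Top.isEmbedding_map_of_leftInverse (g := ⟨r, hr⟩) rfl (hret a) hret

end
end

section
/- The oscillation number of the loop f_n = (α₁ * α_m * α₁⁻¹ * α_m⁻¹)^n, with respect to a point q ∈ X₁ chosen so that α₁ passes through q, satisfies o(f_n) ≥ n. -/
open unitInterval Filter Topology

noncomputable section

lemma trans_left {X : Type*} [TopologicalSpace X] {a b c : X} (γ : Path a b) (γ' : Path b c)
    (t s : I) (h : (t : ℝ) ≤ 1 / 2) (hs : (s : ℝ) = 2 * t) : (γ.trans γ') t = γ s := by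
  rw [Path.trans_apply, dif_pos h]
  congr 1
  ext
  exact hs.symm

lemma trans_right {X : Type*} [TopologicalSpace X] {a b c : X} (γ : Path a b) (γ' : Path b c)
    (t s : I) (h : ¬ (t : ℝ) ≤ 1 / 2) (hs : (s : ℝ) = 2 * t - 1) : (γ.trans γ') t = γ' s := by
  rw [Path.trans_apply, dif_neg h]
  congr 1
  ext
  exact hs.symm

lemma alpha_one_half : alpha 1 ⟨1/2, by norm_num, by norm_num⟩ = qpt := by
  show (⟨alphaFun 1 (1/2), _⟩ : HE) = qpt
  ext : 1
  show alphaFun 1 (1/2) = (2, 0)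
  have h : 2 * Real.pi * (1/2) = Real.pi := by ring
  simp only [alphaFun, h, Real.cos_pi, Real.sin_pi, Prod.mk.injEq]
  norm_num

def commL (m : ℕ) : Path hep hep :=
  (((alpha 1).trans (alpha m)).trans (alpha 1).symm).trans (alpha m).symm

lemma commLq (m : ℕ) : commL m ⟨1/16, by norm_num, by norm_num⟩ = qpt := by
  unfold commL
  rw [trans_left _ _ _ ⟨1/8, by norm_num, by norm_num⟩ (by norm_num) (by norm_num)]
  rw [trans_left _ _ _ ⟨1/4, by norm_num, by norm_num⟩ (by norm_num) (by norm_num)]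
  rw [trans_left _ _ _ ⟨1/2, by norm_num, by norm_num⟩ (by norm_num) (by norm_num)]
  exact alpha_one_half

lemma commLp (m : ℕ) : commL m ⟨1/2, by norm_num, by norm_num⟩ = hep := by
  unfold commL
  rw [trans_left _ _ _ 1 (by norm_num) (by norm_num [Set.Icc.coe_one])]
  exact Path.target _

def halfI (x : I) : I := ⟨(x : ℝ)/2, ⟨by linarith [x.2.1], by linarith [x.2.2]⟩⟩

lemma key (m : ℕ) : ∀ n : ℕ, ∃ t : Fin (n+1) → I, StrictMono t ∧ ∀ i : Fin (n+1),
    ((i : ℕ) % 2 = 0 → fLoop m n (t i) = hep) ∧ ((i : ℕ) % 2 = 1 → fLoop m n (t i) = qpt) := by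
  intro n
  induction n with
  | zero =>
    refine ⟨fun _ => 0, ?_, ?_⟩
    · intro i j hij
      exact absurd (Fin.lt_iff_val_lt_val.mp hij) (by omega)
    · intro i
      have hi := i.isLt
      constructor
      · intro _
        rfl
      · intro h
        omega
  | succ k ih =>
    obtain ⟨t, ht, hval⟩ := ih
    have hdef : fLoop m (k+1) = (fLoop m k).trans (commL m) := rfl
    set c : I := if k % 2 = 0 then ⟨17/32, by norm_num, by norm_num⟩
        else ⟨3/4, by norm_num, by norm_num⟩ with hc
    have hc_half : (1:ℝ)/2 < c := by
      rw [hc]; split <;> norm_num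
    refine ⟨fun i => if h : (i : ℕ) < k + 1 then halfI (t ⟨i, h⟩) else c, ?_, ?_⟩
    · intro i j hij
      have hij' : (i : ℕ) < (j : ℕ) := hij
      have hj2 := j.isLt
      by_cases hj : (j : ℕ) < k + 1
      · have hi : (i : ℕ) < k + 1 := by omega
        simp only [dif_pos hi, dif_pos hj]
        have h1 : t ⟨i, hi⟩ < t ⟨j, hj⟩ := ht (by exact hij')
        have h2 : ((t ⟨i, hi⟩ : I) : ℝ) < ((t ⟨j, hj⟩ : I) : ℝ) := h1
        exact Subtype.coe_lt_coe.mp (by simpa [halfI] using by linarith : ((halfI (t ⟨i, hi⟩) : I) : ℝ) < halfI (t ⟨j, hj⟩))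
      · have hi : (i : ℕ) < k + 1 := by omega
        simp only [dif_pos hi, dif_neg hj]
        have := (t ⟨i, hi⟩).2.2
        exact Subtype.coe_lt_coe.mp (by simp only [halfI]; linarith : ((halfI (t ⟨i, hi⟩) : I) : ℝ) < (c : ℝ))
    · intro i
      have hi2 := i.isLt
      by_cases hi : (i : ℕ) < k + 1
      · simp only [dif_pos hi]
        have heval : fLoop m (k+1) (halfI (t ⟨i, hi⟩)) = fLoop m k (t ⟨i, hi⟩) := by
          rw [hdef]
          refine trans_left _ _ _ _ ?_ ?_
          · have := (t ⟨i, hi⟩).2.2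
            simp only [halfI]
            linarith
          · simp only [halfI]
            ring
        rw [heval]
        exact hval ⟨i, hi⟩
      · have hi' : (i : ℕ) = k + 1 := by omega
        simp only [dif_neg hi]
        by_cases hk : k % 2 = 0
        · have hcv : c = ⟨17/32, by norm_num, by norm_num⟩ := by rw [hc, if_pos hk]
          have heval : fLoop m (k+1) c = qpt := by
            rw [hdef, trans_right _ _ c ⟨1/16, by norm_num, by norm_num⟩
              (by rw [hcv]; norm_num) (by rw [hcv]; norm_num)]
            exact commLq m
          exact ⟨fun h0 => by omega, fun _ => heval⟩
        · have hcv : c = ⟨3/4, by norm_num, by norm_num⟩ := by rw [hc, if_neg hk]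
          have heval : fLoop m (k+1) c = hep := by
            rw [hdef, trans_right _ _ c ⟨1/2, by norm_num, by norm_num⟩
              (by rw [hcv]; norm_num) (by rw [hcv]; norm_num)]
            exact commLp m
          exact ⟨fun _ => heval, fun h1 => by omega⟩

theorem stmt18 (m n : ℕ) (hm : 1 < m) : (n : ℕ∞) ≤ osc qpt (fun t => fLoop m n t) := by
  obtain ⟨t, ht, hval⟩ := key m n
  have h : oscGE qpt (fun t => fLoop m n t) n := ⟨t, ht, hval⟩
  exact le_iSup₂ (f := fun (M : ℕ) (_ : oscGE qpt (fun t => fLoop m n t) M) => (M : ℕ∞)) n h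

end
end
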